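/- arXiv:1302.5067 — 2 statements merged into one kernel-verified Lean document; each statement's English description precedes it below -/
import Mathlib

section
/- (Lemma 1) Let ω = u + iv be in the upper half-plane with k = |ω|, let M ∈ SL₂(ℝ), and let γ = (a b; c d) ∈ SL₂(ℝ). Then Re(γω) − Re(γMω) = [cd(k²Y_M − X_M) + c²(k²Z_M − uX_M) + d²(uY_M − Z_M)] / [(c²k² + d² + 2cdu)(c²X_M + d²Y_M + 2cdZ_M)]. -/
open Complex Matrix MatrixGroups UpperHalfPlane Real

noncomputable section

/-- `X_M = |Aω+B|²` for a real matrix with first row `(A,B)`. -/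
def XR (ω : ℂ) (M : SL(2,ℝ)) : ℝ := ‖(M 0 0 : ℝ) * ω + ((M 0 1 : ℝ) : ℂ)‖ ^ 2

/-- `Y_M = |Cω+D|²` for a real matrix with second row `(C,D)`. -/
def YR (ω : ℂ) (M : SL(2,ℝ)) : ℝ := ‖(M 1 0 : ℝ) * ω + ((M 1 1 : ℝ) : ℂ)‖ ^ 2

/-- `Z_M = AC|ω|² + BD + u(AD+BC)`. -/
def ZR (ω : ℂ) (M : SL(2,ℝ)) : ℝ :=
  M 0 0 * M 1 0 * ‖ω‖ ^ 2 + M 0 1 * M 1 1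
    + ω.re * (M 0 0 * M 1 1 + M 0 1 * M 1 0)

lemma denom_ne_zero' (g : SL(2,ℝ)) (z : ℍ) :
    ((g 1 0 : ℝ) : ℂ) * z + ((g 1 1 : ℝ) : ℂ) ≠ 0 := by
  intro h
  rcases eq_or_ne (g 1 0) 0 with hc | hc
  · have hd : g 1 1 ≠ 0 := by
      intro hd
      have := g.2
      rw [Matrix.det_fin_two] at this
      simp [hc, hd] at this
    simp [hc] at h
    exact hd (by exact_mod_cast h)
  · have him := congrArg Complex.im h
    simp [z.2.ne'] at him
    rcases him with h1 | h1
    · exact hc h1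
    · exact z.2.ne' h1

lemma denomR_ne_zero (g : SL(2,ℝ)) (z : ℍ) :
    (g 1 0)^2 * ((z:ℂ).re^2 + (z:ℂ).im^2) + (g 1 1)^2 + 2 * g 1 0 * g 1 1 * (z:ℂ).re ≠ 0 := by
  have h := denom_ne_zero' g z
  have : Complex.normSq (((g 1 0 : ℝ):ℂ) * z + ((g 1 1 : ℝ):ℂ)) ≠ 0 := by simpa using h
  intro h0
  apply this
  simp only [Complex.normSq_apply, Complex.add_re, Complex.mul_re, Complex.add_im,
    Complex.mul_im, Complex.ofReal_re, Complex.ofReal_im]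
  linear_combination h0

lemma re_smul' (g : SL(2,ℝ)) (z : ℍ) :
    ((g • z : ℍ) : ℂ).re =
      (g 0 0 * g 1 0 * ((z:ℂ).re^2 + (z:ℂ).im^2) + g 0 1 * g 1 1
        + (z:ℂ).re * (g 0 0 * g 1 1 + g 0 1 * g 1 0)) /
      ((g 1 0)^2 * ((z:ℂ).re^2 + (z:ℂ).im^2) + (g 1 1)^2 + 2 * g 1 0 * g 1 1 * (z:ℂ).re) := by
  have h := UpperHalfPlane.specialLinearGroup_apply g z
  have hcoe : ((g • z : ℍ) : ℂ) =
      (((g 0 0 : ℝ):ℂ) * z + ((g 0 1 : ℝ):ℂ)) / (((g 1 0 : ℝ):ℂ) * z + ((g 1 1 : ℝ):ℂ)) := by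
    rw [h]; simp [Algebra.algebraMap_self]
  rw [hcoe, Complex.div_re]
  have hne : ((g 1 0 : ℝ):ℂ) * z + ((g 1 1 : ℝ):ℂ) ≠ 0 := denom_ne_zero' g z
  have hns : Complex.normSq (((g 1 0 : ℝ):ℂ) * z + ((g 1 1 : ℝ):ℂ)) ≠ 0 := by
    simpa using hne
  rw [← add_div]
  congr 1
  · simp [Complex.normSq_apply]; ring
  · simp [Complex.normSq_apply]; ring

/-- Lemma 1: for `ω = u+iv ∈ ℍ`, `k = |ω|`, `M ∈ SL₂(ℝ)` and
`γ = (a b; c d) ∈ SL₂(ℝ)`,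
`Re(γω) − Re(γMω) = [cd(k²Y_M−X_M)+c²(k²Z_M−uX_M)+d²(uY_M−Z_M)] /
[(c²k²+d²+2cdu)(c²X_M+d²Y_M+2cdZ_M)]`. -/
theorem re_sub_re_eq (ω : ℍ) (M γ : SL(2,ℝ)) :
    ((γ • ω : ℍ) : ℂ).re - (((γ * M) • ω : ℍ) : ℂ).re =
      (γ 1 0 * γ 1 1 * (‖(ω : ℂ)‖ ^ 2 * YR ω M - XR ω M)
        + (γ 1 0) ^ 2 * (‖(ω : ℂ)‖ ^ 2 * ZR ω M - (ω : ℂ).re * XR ω M)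
        + (γ 1 1) ^ 2 * ((ω : ℂ).re * YR ω M - ZR ω M)) /
      (((γ 1 0) ^ 2 * ‖(ω : ℂ)‖ ^ 2 + (γ 1 1) ^ 2
          + 2 * γ 1 0 * γ 1 1 * (ω : ℂ).re) *
        ((γ 1 0) ^ 2 * XR ω M + (γ 1 1) ^ 2 * YR ω M + 2 * γ 1 0 * γ 1 1 * ZR ω M)) := by
  have hdγ : γ 0 0 * γ 1 1 - γ 0 1 * γ 1 0 = 1 := by
    have := γ.2; rwa [Matrix.det_fin_two] at this
  have hD1 := denomR_ne_zero γ ω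
  have hD2 := denomR_ne_zero (γ * M) ω
  rw [re_smul', re_smul']
  simp only [XR, YR, ZR, Complex.sq_norm, Complex.normSq_apply, Complex.add_re,
    Complex.mul_re, Complex.add_im, Complex.mul_im, Complex.ofReal_re, Complex.ofReal_im,
    Matrix.SpecialLinearGroup.coe_mul, Matrix.mul_apply, Fin.sum_univ_two] at *
  rw [div_sub_div _ _ hD1 hD2]
  have hden : ((γ 1 0 : ℝ) ^ 2 * ((ω:ℂ).re ^ 2 + (ω:ℂ).im ^ 2) + (γ 1 1 : ℝ) ^ 2 + 2 * (γ 1 0 : ℝ) * (γ 1 1 : ℝ) * (ω:ℂ).re) * (((γ 1 0 : ℝ) * (M 0 0 : ℝ) + (γ 1 1 : ℝ) * (M 1 0 : ℝ)) ^ 2 * ((ω:ℂ).re ^ 2 + (ω:ℂ).im ^ 2) + ((γ 1 0 : ℝ) * (M 0 1 : ℝ) + (γ 1 1 : ℝ) * (M 1 1 : ℝ)) ^ 2 + 2 * ((γ 1 0 : ℝ) * (M 0 0 : ℝ) + (γ 1 1 : ℝ) * (M 1 0 : ℝ)) * ((γ 1 0 : ℝ) * (M 0 1 : ℝ) + (γ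 1 1 : ℝ) * (M 1 1 : ℝ)) * (ω:ℂ).re) = ((γ 1 0 : ℝ) ^ 2 * ((ω:ℂ).re ^ 2 + (ω:ℂ).im ^ 2) + (γ 1 1 : ℝ) ^ 2 + 2 * (γ 1 0 : ℝ) * (γ 1 1 : ℝ) * (ω:ℂ).re) * ((γ 1 0 : ℝ)^2*(((M 0 0 : ℝ)*(ω:ℂ).re+(M 0 1 : ℝ))^2 + ((M 0 0 : ℝ)*(ω:ℂ).im)^2) + (γ 1 1 : ℝ)^2*(((M 1 0 : ℝ)*(ω:ℂ).re+(M 1 1 : ℝ))^2 + ((M 1 0 : ℝ)*(ω:ℂ).im)^2) + 2*(γ 1 0 : ℝ)*(γ 1 1 : ℝ)*((M 0 0 : ℝ)*(M 1 0 : ℝ)*((ω:ℂ).re^2 + (ω:ℂ).im^2) + (M 0 1 : ℝ)*(M 1 1 : ℝ) + (ω:ℂ).re*((M 0 0 : ℝ)*(M 1 1 : ℝ)+(M 0 1 : ℝ)*(M 1 0 : ℝ)))) := by ring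
  rw [hden]
  congr 1
  · linear_combination ((γ 1 0 : ℝ)*(γ 1 1 : ℝ)*(((ω:ℂ).re^2 + (ω:ℂ).im^2)*(((M 1 0 : ℝ)*(ω:ℂ).re+(M 1 1 : ℝ))^2 + ((M 1 0 : ℝ)*(ω:ℂ).im)^2) - (((M 0 0 : ℝ)*(ω:ℂ).re+(M 0 1 : ℝ))^2 + ((M 0 0 : ℝ)*(ω:ℂ).im)^2)) + (γ 1 0 : ℝ)^2*(((ω:ℂ).re^2 + (ω:ℂ).im^2)*((M 0 0 : ℝ)*(M 1 0 : ℝ)*((ω:ℂ).re^2 + (ω:ℂ).im^2) + (M 0 1 : ℝ)*(M 1 1 : ℝ) + (ω:ℂ).re*((M 0 0 : ℝ)*(M 1 1 : ℝ)+(M 0 1 : ℝ)*(M 1 0 : ℝ))) - (ω:ℂ).re*(((M 0 0 : ℝ)*(ω:ℂ).re+(M 0 1 : ℝ))^2 + ((M 0 0 : ℝ)*(ω:ℂ).im)^2)) + (γ 1 1 : ℝ)^2*((ω:ℂ).re*(((M 1 0 : ℝ)*(ω:ℂ).re+(M 1 1 : ℝ))^2 + ((M 1 0 : ℝ)*(ω:ℂ).im)^2)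 - ((M 0 0 : ℝ)*(M 1 0 : ℝ)*((ω:ℂ).re^2 + (ω:ℂ).im^2) + (M 0 1 : ℝ)*(M 1 1 : ℝ) + (ω:ℂ).re*((M 0 0 : ℝ)*(M 1 1 : ℝ)+(M 0 1 : ℝ)*(M 1 0 : ℝ))))) * hdγ
  · ring
end
end

section
/- (Lemma 6) Let ω = u + iv be in the upper half-plane with k = |ω|, u ≥ 0, k ≤ 1. Suppose γ = (a b; c d), γ′ = (a′ b′; c′ d′) ∈ SL₂(ℤ) with c, d, c′, d′ > 0, a/c ≤ b′/d′, and Φ(γ′) − Φ(γ) ≤ ξ/Q² for some Q ≥ max{c, d, c′, d′}. Then: (i) γ′ = γM for some M ∈ 𝓕(ξ); (ii) moreover, if M = γ₁⋯γ_ℓ with γ_j = (K_j 1; −1 0) as in the definition of 𝓕(ξ), then for each j the partial product γγ₁⋯γ_j equals (a_j a_{j−1}; q_j q_{j−1}) with lower-row entries q₁, …, q_ℓ ∈ {1, 2, …, Q}. -/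
open Complex Matrix MatrixGroups UpperHalfPlane Real

noncomputable section
set_option maxHeartbeats 1000000
set_option linter.unusedTactic false
set_option linter.unreachableTactic false
set_option linter.unusedVariables false

/-- real entry `γ i j` of an integer matrix. -/
def ent (γ : SL(2,ℤ)) (i j : Fin 2) : ℝ := ((γ i j : ℤ) : ℝ)

/-- `X_γ = |aω+b|²`. -/
def Xg (ω : ℂ) (γ : SL(2,ℤ)) : ℝ := (‖ent γ 0 0 * ω + (ent γ 0 1 : ℂ)‖) ^ 2

/-- `Y_γ = |cω+d|²`. -/
def Yg (ω : ℂ) (γ : SL(2,ℤ)) : ℝ := (‖ent γ 1 0 * ω + (ent γ 1 1 : ℂ)‖) ^ 2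

/-- `Z_γ = ac|ω|² + bd + u(ad+bc)`. -/
def Zg (ω : ℂ) (γ : SL(2,ℤ)) : ℝ :=
  ent γ 0 0 * ent γ 1 0 * (‖ω‖) ^ 2 + ent γ 0 1 * ent γ 1 1
    + ω.re * (ent γ 0 0 * ent γ 1 1 + ent γ 0 1 * ent γ 1 0)

/-- `T_γ = ‖γ‖² = X_γ + k²Y_γ − 2uZ_γ`. -/
def Tg (ω : ℂ) (γ : SL(2,ℤ)) : ℝ :=
  Xg ω γ + (‖ω‖) ^ 2 * Yg ω γ - 2 * ω.re * Zg ω γ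

/-- `Φ(γ) = Re(γω)`. -/
def Phi (ω : ℍ) (γ : SL(2,ℤ)) : ℝ := ((γ • ω : ℍ) : ℂ).re

/-- `ε_T = (T_γ − √(T_γ² − Δ²))/Δ` with `Δ = 2v²`. -/
def epsT (ω : ℂ) (γ : SL(2,ℤ)) : ℝ :=
  (Tg ω γ - Real.sqrt ((Tg ω γ) ^ 2 - (2 * ω.im ^ 2) ^ 2)) / (2 * ω.im ^ 2)

/-- `Ψ(γ) = (Z_γ − u ε_T)/(Y_γ − ε_T)`, the x-intercept of the geodesic `ω → γω`. -/
def Psi (ω : ℍ) (γ : SL(2,ℤ)) : ℝ :=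
  (Zg ω γ - (ω : ℂ).re * epsT ω γ) / (Yg ω γ - epsT ω γ)

/-- the matrix `(K 1; −1 0) ∈ SL₂(ℤ)`. -/
def genK (K : ℤ) : SL(2,ℤ) := ⟨!![K, 1; -1, 0], by simp [Matrix.det_fin_two_of]⟩

/-- `𝓕(ξ)`: all products `γ₁⋯γ_ℓ`, `ℓ ≥ 1`, of matrices `γ_j = (K_j 1; −1 0)`, `K_j ≥ 1`,
with `K₁+⋯+K_ℓ ≤ 4ξ/k⁴`. -/
def FareySet (k ξ : ℝ) : Set (SL(2,ℤ)) :=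
  {M | ∃ L : List ℤ, L ≠ [] ∧ (∀ K ∈ L, 1 ≤ K) ∧ ((L.sum : ℝ) ≤ 4 * ξ / k ^ 4) ∧
    (L.map genK).prod = M}

-- ================= auxiliary lemmas =================

lemma genK00 (K : ℤ) : genK K 0 0 = K := rfl
lemma genK01 (K : ℤ) : genK K 0 1 = 1 := rfl
lemma genK10 (K : ℤ) : genK K 1 0 = -1 := rfl
lemma genK11 (K : ℤ) : genK K 1 1 = 0 := rfl

lemma SL_mul_apply (A B : SL(2,ℤ)) (i j : Fin 2) :
    (A*B) i j = A i 0 * B 0 j + A i 1 * B 1 j := by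
  rw [Matrix.SpecialLinearGroup.coe_mul, Matrix.mul_apply, Fin.sum_univ_two]

lemma mul_genK_00 (A : SL(2,ℤ)) (K : ℤ) : (A * genK K) 0 0 = K * A 0 0 - A 0 1 := by
  rw [SL_mul_apply, genK00, genK10]; ring
lemma mul_genK_01 (A : SL(2,ℤ)) (K : ℤ) : (A * genK K) 0 1 = A 0 0 := by
  rw [SL_mul_apply, genK01, genK11]; ring
lemma mul_genK_10 (A : SL(2,ℤ)) (K : ℤ) : (A * genK K) 1 0 = K * A 1 0 - A 1 1 := by
  rw [SL_mul_apply, genK00, genK10]; ring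
lemma mul_genK_11 (A : SL(2,ℤ)) (K : ℤ) : (A * genK K) 1 1 = A 1 0 := by
  rw [SL_mul_apply, genK01, genK11]; ring

lemma SL_det (A : SL(2,ℤ)) : A 0 0 * A 1 1 - A 0 1 * A 1 0 = 1 := by
  have h := A.2
  rwa [Matrix.det_fin_two] at h

lemma idG00 (P G : SL(2,ℤ)) :
    G 0 0 = P 0 0 * (P 1 1 * G 0 0 - P 0 1 * G 1 0) + P 0 1 * (P 0 0 * G 1 0 - P 1 0 * G 0 0) := by
  linear_combination (-(G 0 0)) * SL_det P
lemma idG10 (P G : SL(2,ℤ)) :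
    G 1 0 = P 1 0 * (P 1 1 * G 0 0 - P 0 1 * G 1 0) + P 1 1 * (P 0 0 * G 1 0 - P 1 0 * G 0 0) := by
  linear_combination (-(G 1 0)) * SL_det P
lemma idG01 (P G : SL(2,ℤ)) :
    G 0 1 = P 0 0 * (P 1 1 * G 0 1 - P 0 1 * G 1 1) + P 0 1 * (P 0 0 * G 1 1 - P 1 0 * G 0 1) := by
  linear_combination (-(G 0 1)) * SL_det P
lemma idG11 (P G : SL(2,ℤ)) :
    G 1 1 = P 1 0 * (P 1 1 * G 0 1 - P 0 1 * G 1 1) + P 1 1 * (P 0 0 * G 1 1 - P 1 0 * G 0 1) := by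
  linear_combination (-(G 1 1)) * SL_det P
lemma iddet (P G : SL(2,ℤ)) :
    (P 1 1 * G 0 0 - P 0 1 * G 1 0) * (P 0 0 * G 1 1 - P 1 0 * G 0 1)
      - (P 0 0 * G 1 0 - P 1 0 * G 0 0) * (P 1 1 * G 0 1 - P 0 1 * G 1 1) = 1 := by
  linear_combination (G 0 0 * G 1 1 - G 0 1 * G 1 0) * SL_det P + SL_det G

lemma phi_eq (ω : ℍ) (γ : SL(2,ℤ)) :
    Phi ω γ = ((ent γ 0 0 * (ω:ℂ).re + ent γ 0 1) * (ent γ 1 0 * (ω:ℂ).re + ent γ 1 1)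
       + (ent γ 0 0 * (ω:ℂ).im) * (ent γ 1 0 * (ω:ℂ).im))
      / ((ent γ 1 0 * (ω:ℂ).re + ent γ 1 1)^2 + (ent γ 1 0 * (ω:ℂ).im)^2) := by
  unfold Phi
  rw [UpperHalfPlane.specialLinearGroup_apply]
  rw [UpperHalfPlane.coe_mk]
  rw [Complex.div_re]
  simp only [Complex.normSq_apply, Complex.add_re, Complex.add_im, Complex.mul_re,
    Complex.mul_im, Complex.ofReal_re, Complex.ofReal_im, algebraMap_int_eq,
    Int.coe_castRingHom, Complex.intCast_re, Complex.intCast_im]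
  rw [← add_div]
  unfold ent
  congr 1 <;> ring

lemma key (u v Q a b c d K : ℝ) (hv : 0 < v) (hk1 : u^2+v^2 ≤ 1) (hu : 0 ≤ u)
    (hdet : a*d - b*c = 1) (hc : 1 ≤ c) (hd : 1 ≤ d) (he : 1 ≤ K*c - d)
    (hcQ : c ≤ Q) (hdQ : d ≤ Q) (heQ : K*c - d ≤ Q) :
    (u^2+v^2)^2 * K ≤ 4*Q^2 *
      ( (((K*a-b)*u + a) * ((K*c-d)*u + c) + ((K*a-b)*v) * ((K*c-d)*v))
          / (((K*c-d)*u + c)^2 + ((K*c-d)*v)^2)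
        - ((a*u+b)*(c*u+d) + (a*v)*(c*v)) / ((c*u+d)^2 + (c*v)^2) ) := by
  have hQ1 : 1 ≤ Q := le_trans hc hcQ
  have hu1 : u ≤ 1 := by nlinarith [sq_nonneg v]
  have hc0 : (0:ℝ) < c := by linarith
  have hd0 : (0:ℝ) < d := by linarith
  have he0 : (0:ℝ) < K*c - d := by linarith
  have hk2pos : (0:ℝ) < u^2+v^2 := by positivity
  have hYApos : (0:ℝ) < (c*u+d)^2 + (c*v)^2 := by
    have h1 : (0:ℝ) < (c*v)^2 := by positivity
    nlinarith [sq_nonneg (c*u+d)]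
  have hYBpos : (0:ℝ) < ((K*c-d)*u+c)^2 + ((K*c-d)*v)^2 := by
    have h1 : (0:ℝ) < ((K*c-d)*v)^2 := by positivity
    nlinarith [sq_nonneg ((K*c-d)*u+c)]
  have hcd : c*d ≤ Q*Q := mul_le_mul hcQ hdQ (by linarith) (by linarith)
  have hc2 : c*c ≤ Q*Q := mul_le_mul hcQ hcQ (by linarith) (by linarith)
  have hd2 : d*d ≤ Q*Q := mul_le_mul hdQ hdQ (by linarith) (by linarith)
  have hec : (K*c-d)*c ≤ Q*Q := mul_le_mul heQ hcQ (by linarith) (by linarith)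
  have he2 : (K*c-d)*(K*c-d) ≤ Q*Q := mul_le_mul heQ heQ (by linarith) (by linarith)
  have hYAle : (c*u+d)^2 + (c*v)^2 ≤ 4*Q^2 := by
    have h1 : c*c*(u^2+v^2) ≤ Q*Q := by nlinarith
    have h2 : c*d*u ≤ Q*Q := by nlinarith
    nlinarith
  have hYBle : ((K*c-d)*u+c)^2 + ((K*c-d)*v)^2 ≤ 4*Q^2 := by
    have h1 : (K*c-d)*(K*c-d)*(u^2+v^2) ≤ Q*Q := by nlinarith
    have h2 : (K*c-d)*c*u ≤ Q*Q := by nlinarith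
    nlinarith
  have hI1 : c*(((K*a-b)*u + a) * ((K*c-d)*u + c) + ((K*a-b)*v) * ((K*c-d)*v))
      - a*(((K*c-d)*u+c)^2 + ((K*c-d)*v)^2) = (K*c-d)*(u^2+v^2) + u*c := by
    linear_combination ((K*c-d)*(u^2+v^2) + u*c) * hdet
  have hI2 : a*((c*u+d)^2 + (c*v)^2) - c*((a*u+b)*(c*u+d) + (a*v)*(c*v))
      = d + u*c := by
    linear_combination (d + u*c) * hdet
  have hsplit : (((K*a-b)*u + a) * ((K*c-d)*u + c) + ((K*a-b)*v) * ((K*c-d)*v))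
          / (((K*c-d)*u+c)^2 + ((K*c-d)*v)^2)
        - ((a*u+b)*(c*u+d) + (a*v)*(c*v)) / ((c*u+d)^2 + (c*v)^2)
      = ((K*c-d)*(u^2+v^2) + u*c)/(c*(((K*c-d)*u+c)^2 + ((K*c-d)*v)^2))
        + (d + u*c)/(c*((c*u+d)^2 + (c*v)^2)) := by
    rw [← hI1, ← hI2]
    field_simp
    ring
  rw [hsplit]
  have h1 : ((K*c-d)*(u^2+v^2))/(c*(4*Q^2))
      ≤ ((K*c-d)*(u^2+v^2) + u*c)/(c*(((K*c-d)*u+c)^2 + ((K*c-d)*v)^2)) := by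
    apply div_le_div₀ (by positivity) (by nlinarith) (by positivity)
    nlinarith
  have h2 : d/(c*(4*Q^2)) ≤ (d + u*c)/(c*((c*u+d)^2 + (c*v)^2)) := by
    apply div_le_div₀ (by positivity) (by nlinarith) (by positivity)
    nlinarith
  have hmain : (u^2+v^2)^2 * K ≤ 4*Q^2 * (((K*c-d)*(u^2+v^2))/(c*(4*Q^2)) + d/(c*(4*Q^2))) := by
    rw [← add_div]
    rw [show 4*Q^2 * (((K*c-d)*(u^2+v^2) + d)/(c*(4*Q^2))) = ((K*c-d)*(u^2+v^2)+d)/c by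
      field_simp]
    rw [le_div_iff₀ hc0]
    have hkk : (u^2+v^2)^2 ≤ u^2+v^2 := by nlinarith
    have hek : (K*c-d)*((u^2+v^2)^2) ≤ (K*c-d)*(u^2+v^2) :=
      mul_le_mul_of_nonneg_left hkk (le_of_lt he0)
    have hdk1 : d*((u^2+v^2)^2) ≤ d*(u^2+v^2) := mul_le_mul_of_nonneg_left hkk (le_of_lt hd0)
    have hdk2 : d*(u^2+v^2) ≤ d := mul_le_of_le_one_right (le_of_lt hd0) hk1
    have hre : (u^2+v^2)^2*K*c = (K*c-d)*((u^2+v^2)^2) + d*((u^2+v^2)^2) := by ring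
    linarith
  calc (u^2+v^2)^2*K ≤ 4*Q^2 * (((K*c-d)*(u^2+v^2))/(c*(4*Q^2)) + d/(c*(4*Q^2))) := hmain
    _ ≤ 4*Q^2 * (((K*c-d)*(u^2+v^2) + u*c)/(c*(((K*c-d)*u+c)^2 + ((K*c-d)*v)^2))
        + (d + u*c)/(c*((c*u+d)^2 + (c*v)^2))) := by
        apply mul_le_mul_of_nonneg_left (by linarith) (by positivity)

lemma phi_step (ω : ℍ) (hu : 0 ≤ (ω:ℂ).re) (hk : ‖(ω:ℂ)‖ ≤ 1) (Q : ℝ)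
    (A : SL(2,ℤ)) (K : ℤ)
    (hc : 1 ≤ A 1 0) (hd : 1 ≤ A 1 1) (he : 1 ≤ K * A 1 0 - A 1 1)
    (hcQ : ((A 1 0 : ℤ) : ℝ) ≤ Q) (hdQ : ((A 1 1 : ℤ) : ℝ) ≤ Q)
    (heQ : ((K * A 1 0 - A 1 1 : ℤ) : ℝ) ≤ Q) :
    (‖(ω:ℂ)‖)^4 * (K:ℝ) ≤ 4*Q^2*(Phi ω (A * genK K) - Phi ω A) := by
  have habs : (‖(ω:ℂ)‖)^2 = (ω:ℂ).re^2 + (ω:ℂ).im^2 := by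
    rw [Complex.sq_norm, Complex.normSq_apply]; ring
  have habs4 : (‖(ω:ℂ)‖)^4 = ((ω:ℂ).re^2 + (ω:ℂ).im^2)^2 := by
    rw [← habs]; ring
  have hk1 : (ω:ℂ).re^2 + (ω:ℂ).im^2 ≤ 1 := by
    rw [← habs]
    nlinarith [norm_nonneg (ω:ℂ)]
  have hv : 0 < (ω:ℂ).im := ω.2
  have hdet : ent A 0 0 * ent A 1 1 - ent A 0 1 * ent A 1 0 = 1 := by
    unfold ent
    exact_mod_cast SL_det A
  have hcR : (1:ℝ) ≤ ent A 1 0 := by unfold ent; exact_mod_cast hc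
  have hdR : (1:ℝ) ≤ ent A 1 1 := by unfold ent; exact_mod_cast hd
  have heR : (1:ℝ) ≤ (K:ℝ) * ent A 1 0 - ent A 1 1 := by
    unfold ent; exact_mod_cast he
  have heQR : (K:ℝ) * ent A 1 0 - ent A 1 1 ≤ Q := by
    unfold ent
    push_cast at heQ
    convert heQ using 2
  have h := key (ω:ℂ).re (ω:ℂ).im Q (ent A 0 0) (ent A 0 1) (ent A 1 0) (ent A 1 1) (K:ℝ)
    hv hk1 hu hdet hcR hdR heR hcQ hdQ heQR
  rw [habs4]
  rw [phi_eq ω (A * genK K), phi_eq ω A]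
  have e00 : ent (A * genK K) 0 0 = (K:ℝ) * ent A 0 0 - ent A 0 1 := by
    unfold ent; rw [mul_genK_00]; push_cast; ring
  have e01 : ent (A * genK K) 0 1 = ent A 0 0 := by unfold ent; rw [mul_genK_01]
  have e10 : ent (A * genK K) 1 0 = (K:ℝ) * ent A 1 0 - ent A 1 1 := by
    unfold ent; rw [mul_genK_10]; push_cast; ring
  have e11 : ent (A * genK K) 1 1 = ent A 1 0 := by unfold ent; rw [mul_genK_11]
  rw [e00, e01, e10, e11]
  convert h using 3 <;> ring

lemma terminal_case (ω : ℍ) (hu0 : 0 ≤ (ω:ℂ).re) (hk : ‖((ω:ℍ):ℂ)‖ ≤ 1) (Q : ℝ)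
    (G : SL(2,ℤ)) (hG10 : 1 ≤ G 1 0) (hG11 : 1 ≤ G 1 1)
    (hG10Q : ((G 1 0 : ℤ):ℝ) ≤ Q) (hG11Q : ((G 1 1 : ℤ):ℝ) ≤ Q)
    (P : SL(2,ℤ))
    (hP10 : 1 ≤ P 1 0) (hP11 : 1 ≤ P 1 1)
    (hP10Q : ((P 1 0 : ℤ):ℝ) ≤ Q) (hP11Q : ((P 1 1 : ℤ):ℝ) ≤ Q)
    (hp : 1 ≤ P 1 1 * G 0 0 - P 0 1 * G 1 0)
    (hq : P 0 0 * G 1 0 - P 1 0 * G 0 0 ≤ -1)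
    (hr : 1 ≤ P 1 1 * G 0 1 - P 0 1 * G 1 1)
    (hs0 : P 0 0 * G 1 1 - P 1 0 * G 0 1 = 0) :
    ∃ L : List ℤ, L ≠ [] ∧ (∀ K ∈ L, 1 ≤ K) ∧ G = P * (L.map genK).prod ∧
      (‖((ω:ℍ):ℂ)‖)^4 * ((L.sum : ℤ):ℝ) ≤ 4*Q^2*(Phi ω G - Phi ω P) ∧
      ∀ j : ℕ, 1 ≤ j → j ≤ L.length →
        (1 ≤ (P * ((L.take j).map genK).prod) 1 0 ∧
         (((P * ((L.take j).map genK).prod) 1 0 : ℤ):ℝ) ≤ Q) := by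
  have hdetM := iddet P G
  rw [hs0, mul_zero] at hdetM
  -- -(q*r) = 1 with q ≤ -1, r ≥ 1
  have hqr : (P 0 0 * G 1 0 - P 1 0 * G 0 0) * (P 1 1 * G 0 1 - P 0 1 * G 1 1) = -1 := by
    linarith
  have hr1 : P 1 1 * G 0 1 - P 0 1 * G 1 1 = 1 := by
    nlinarith
  have hq1 : P 0 0 * G 1 0 - P 1 0 * G 0 0 = -1 := by
    rw [hr1, mul_one] at hqr
    exact hqr
  set p := P 1 1 * G 0 0 - P 0 1 * G 1 0 with hpdef
  have hGP : G = P * genK p := by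
    apply Subtype.ext
    apply Matrix.ext
    intro i j
    fin_cases i <;> fin_cases j
    · show G 0 0 = (P * genK p) 0 0
      rw [mul_genK_00]
      linear_combination (-(G 0 0)) * SL_det P + (P 0 1) * hq1
    · show G 0 1 = (P * genK p) 0 1
      rw [mul_genK_01]
      linear_combination (-(G 0 1)) * SL_det P + (P 0 0) * hr1 + (P 0 1) * hs0
    · show G 1 0 = (P * genK p) 1 0
      rw [mul_genK_10]
      linear_combination (-(G 1 0)) * SL_det P + (P 1 1) * hq1
    · show G 1 1 = (P * genK p) 1 1
      rw [mul_genK_11]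
      linear_combination (-(G 1 1)) * SL_det P + (P 1 0) * hr1 + (P 1 1) * hs0
  have hGP10 : p * P 1 0 - P 1 1 = G 1 0 := by rw [hGP, mul_genK_10]
  refine ⟨[p], by simp, ?_, ?_, ?_, ?_⟩
  · intro K hK
    rw [List.mem_singleton] at hK
    subst hK; exact hp
  · simpa using hGP
  · have hstep := phi_step ω hu0 hk Q P p hP10 hP11 (by rw [hGP10]; exact hG10)
      hP10Q hP11Q (by rw [hGP10]; exact hG10Q)
    rw [← hGP] at hstep
    simpa using hstep
  · intro j hj1 hj2
    simp only [List.length_singleton] at hj2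
    have : j = 1 := by omega
    subst this
    have htake : (([p].take 1).map genK).prod = genK p := by simp
    rw [htake, ← hGP]
    exact ⟨hG10, hG10Q⟩

lemma main_ind (ω : ℍ) (hu0 : 0 ≤ (ω:ℂ).re) (hk : ‖((ω:ℍ):ℂ)‖ ≤ 1) (Q : ℝ)
    (G : SL(2,ℤ)) (hG10 : 1 ≤ G 1 0) (hG11 : 1 ≤ G 1 1)
    (hG10Q : ((G 1 0 : ℤ):ℝ) ≤ Q) (hG11Q : ((G 1 1 : ℤ):ℝ) ≤ Q) :
    ∀ n : ℕ, ∀ P : SL(2,ℤ),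
    1 ≤ P 1 0 → 1 ≤ P 1 1 → ((P 1 0 : ℤ):ℝ) ≤ Q → ((P 1 1 : ℤ):ℝ) ≤ Q →
    1 ≤ P 1 1 * G 0 0 - P 0 1 * G 1 0 →
    P 0 0 * G 1 0 - P 1 0 * G 0 0 ≤ -1 →
    1 ≤ P 1 1 * G 0 1 - P 0 1 * G 1 1 →
    P 0 0 * G 1 1 - P 1 0 * G 0 1 ≤ 0 →
    (P 1 0 * G 0 1 - P 0 0 * G 1 1).toNat ≤ n →
    ∃ L : List ℤ, L ≠ [] ∧ (∀ K ∈ L, 1 ≤ K) ∧ G = P * (L.map genK).prod ∧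
      (‖((ω:ℍ):ℂ)‖)^4 * ((L.sum : ℤ):ℝ) ≤ 4*Q^2*(Phi ω G - Phi ω P) ∧
      ∀ j : ℕ, 1 ≤ j → j ≤ L.length →
        (1 ≤ (P * ((L.take j).map genK).prod) 1 0 ∧
         (((P * ((L.take j).map genK).prod) 1 0 : ℤ):ℝ) ≤ Q) := by
  intro n
  induction n with
  | zero =>
    intro P hP10 hP11 hP10Q hP11Q hp hq hr hs hn
    have hs0 : P 0 0 * G 1 1 - P 1 0 * G 0 1 = 0 := by omega
    exact terminal_case ω hu0 hk Q G hG10 hG11 hG10Q hG11Q P hP10 hP11 hP10Q hP11Q hp hq hr hs0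
  | succ n IH =>
    intro P hP10 hP11 hP10Q hP11Q hp hq hr hs hn
    by_cases hs0 : P 0 0 * G 1 1 - P 1 0 * G 0 1 = 0
    · exact terminal_case ω hu0 hk Q G hG10 hG11 hG10Q hG11Q P hP10 hP11 hP10Q hP11Q hp hq hr hs0
    -- step case : s ≤ -1, t := -s ≥ 1
    set t : ℤ := P 1 0 * G 0 1 - P 0 0 * G 1 1 with htdef
    set r : ℤ := P 1 1 * G 0 1 - P 0 1 * G 1 1 with hrdef
    have ht1 : 1 ≤ t := by omega
    set K : ℤ := (r - 1) / t + 1 with hKdef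
    have hdiv : t * ((r-1)/t) = (r-1) - (r-1) % t := by rw [Int.emod_def]; ring
    have hm0 : 0 ≤ (r-1) % t := Int.emod_nonneg _ (by omega)
    have hmlt : (r-1) % t < t := Int.emod_lt_of_pos _ (by omega)
    have hKt : K * t = (r-1) - (r-1) % t + t := by
      rw [hKdef]; linear_combination hdiv
    have hKt1 : r ≤ K * t := by omega
    have hKt2 : K * t ≤ r + t - 1 := by omega
    have hK1 : 1 ≤ K := by
      rcases le_or_gt 1 K with h | h
      · exact h
      · exfalso
        have h0 : K ≤ 0 := by omega
        have := mul_le_mul_of_nonneg_right h0 (show (0:ℤ) ≤ t by omega)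
        rw [zero_mul] at this
        omega
    -- new state P' = P * genK K
    set P' : SL(2,ℤ) := P * genK K with hP'def
    have eP'00 : P' 0 0 = K * P 0 0 - P 0 1 := mul_genK_00 P K
    have eP'01 : P' 0 1 = P 0 0 := mul_genK_01 P K
    have eP'10 : P' 1 0 = K * P 1 0 - P 1 1 := mul_genK_10 P K
    have eP'11 : P' 1 1 = P 1 0 := mul_genK_11 P K
    -- new M entries
    have hp' : P' 1 1 * G 0 0 - P' 0 1 * G 1 0 = -(P 0 0 * G 1 0 - P 1 0 * G 0 0) := by
      rw [eP'11, eP'01]; try ring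
    have hr' : P' 1 1 * G 0 1 - P' 0 1 * G 1 1 = t := by
      rw [eP'11, eP'01, htdef]; try ring
    have hs' : P' 0 0 * G 1 1 - P' 1 0 * G 0 1 = r - K * t := by
      rw [eP'00, eP'10, hrdef, htdef]; try ring
    have hp'1 : 1 ≤ P' 1 1 * G 0 0 - P' 0 1 * G 1 0 := by rw [hp']; omega
    have hr'1 : 1 ≤ P' 1 1 * G 0 1 - P' 0 1 * G 1 1 := by rw [hr']; omega
    have hs'0 : P' 0 0 * G 1 1 - P' 1 0 * G 0 1 ≤ 0 := by rw [hs']; omega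
    have hdet' := iddet P' G
    have hq'1 : P' 0 0 * G 1 0 - P' 1 0 * G 0 0 ≤ -1 := by
      have h1 : (P' 1 1 * G 0 0 - P' 0 1 * G 1 0) * (P' 0 0 * G 1 1 - P' 1 0 * G 0 1) ≤ 0 :=
        mul_nonpos_of_nonneg_of_nonpos (by omega) hs'0
      have h2 : (P' 0 0 * G 1 0 - P' 1 0 * G 0 0) * t ≤ -1 := by
        rw [← hr']; linarith [hdet']
      rcases le_or_gt (P' 0 0 * G 1 0 - P' 1 0 * G 0 0) (-1) with h | h
      · exact h
      · exfalso
        have h3 : 0 ≤ (P' 0 0 * G 1 0 - P' 1 0 * G 0 0) * t :=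
          mul_nonneg (by omega) (by omega)
        omega
    -- lower row of P' : 1 ≤ P' 1 0 ≤ Q
    have hP'10pos : 1 ≤ P' 1 0 := by
      have hid := idG10 P' G
      set q' : ℤ := P' 0 0 * G 1 0 - P' 1 0 * G 0 0
      set p' : ℤ := P' 1 1 * G 0 0 - P' 0 1 * G 1 0
      rw [eP'11] at hid
      have h2 : P' 1 0 * p' = G 1 0 + P 1 0 * (-q') := by linarith
      have h3 : 1 ≤ P' 1 0 * p' := by nlinarith
      nlinarith
    have hP'10Q : ((P' 1 0 : ℤ):ℝ) ≤ Q := by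
      have hid := idG11 P' G
      rw [hr', eP'11] at hid
      -- G 1 1 = P' 1 0 * t + P 1 0 * s', s' = r - K*t
      have hZ : P' 1 0 * t = G 1 1 + P 1 0 * (K*t - r) := by
        rw [hs'] at hid; linarith
      have hm' : (0:ℤ) ≤ K*t - r := by omega
      have htm : K*t - r + 1 ≤ t := by omega
      -- cast to ℝ
      have hZR : ((P' 1 0 : ℤ):ℝ) * ((t:ℤ):ℝ) = ((G 1 1 : ℤ):ℝ) + ((P 1 0 : ℤ):ℝ) * ((K*t - r : ℤ):ℝ) := by
        exact_mod_cast congrArg (fun z : ℤ => (z:ℝ)) hZ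
      have hm'R : (0:ℝ) ≤ ((K*t - r : ℤ):ℝ) := by exact_mod_cast hm'
      have htmR : ((K*t - r : ℤ):ℝ) + 1 ≤ ((t:ℤ):ℝ) := by exact_mod_cast htm
      have hx1 : (1:ℝ) ≤ ((P' 1 0 : ℤ):ℝ) := by exact_mod_cast hP'10pos
      nlinarith [mul_le_mul_of_nonneg_right hP10Q hm'R,
        mul_le_mul_of_nonneg_left htmR (by linarith : (0:ℝ) ≤ ((P' 1 0 : ℤ):ℝ))]
    -- measure decreases
    have hmeas : (P' 1 0 * G 0 1 - P' 0 0 * G 1 1).toNat ≤ n := by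
      have : P' 1 0 * G 0 1 - P' 0 0 * G 1 1 = K*t - r := by
        rw [eP'00, eP'10, hrdef, htdef]; try ring
      rw [this]
      omega
    obtain ⟨L', hne', hKmem', hGP', hsum', hpart'⟩ :=
      IH P' hP'10pos (by rw [eP'11]; exact hP10) hP'10Q (by rw [eP'11]; exact hP10Q)
        hp'1 hq'1 hr'1 hs'0 hmeas
    refine ⟨K :: L', by simp, ?_, ?_, ?_, ?_⟩
    · intro x hx
      rcases List.mem_cons.mp hx with h | h
      · subst h; exact hK1
      · exact hKmem' x h
    · rw [List.map_cons, List.prod_cons, ← mul_assoc, ← hP'def]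
      exact hGP'
    · have hstep := phi_step ω hu0 hk Q P K hP10 hP11
        (by rw [← eP'10]; exact hP'10pos) hP10Q hP11Q
        (by have h := hP'10Q; rw [eP'10] at h; exact h)
      rw [← hP'def] at hstep
      rw [List.sum_cons, Int.cast_add, mul_add]
      linarith [hstep, hsum']
    · intro j hj1 hj2
      cases j with
      | zero => omega
      | succ j' =>
        have htake : ((K :: L').take (j'+1)) = K :: L'.take j' := List.take_succ_cons
        rw [htake, List.map_cons, List.prod_cons, ← mul_assoc, ← hP'def]
        cases Nat.eq_zero_or_pos j' with
        | inl h =>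
          subst h
          simpa using ⟨hP'10pos, hP'10Q⟩
        | inr h =>
          have hj2' : j' ≤ L'.length := by
            rw [List.length_cons] at hj2; omega
          exact hpart' j' h hj2'

lemma partial_11 (A : SL(2,ℤ)) (L : List ℤ) (j : ℕ) (hj1 : 1 ≤ j) (hj2 : j ≤ L.length) :
    (A * ((L.take j).map genK).prod) 1 1 = (A * ((L.take (j-1)).map genK).prod) 1 0 := by
  obtain ⟨j', rfl⟩ : ∃ j', j = j' + 1 := ⟨j - 1, by omega⟩
  have hlt : j' < L.length := by omega
  have hg : L.take (j'+1) = L.take j' ++ [L.get ⟨j', hlt⟩] := by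
    rw [List.take_succ]
    congr 1
    rw [List.getElem?_eq_getElem hlt]
    rfl
  rw [hg, List.map_append, List.prod_append]
  simp only [List.map_cons, List.map_nil, List.prod_cons, List.prod_nil, mul_one,
    Nat.add_sub_cancel]
  rw [← mul_assoc, mul_genK_11]

/-- Lemma 6: under the stated hypotheses, `γ′ = γM` with `M = γ₁⋯γ_ℓ ∈ 𝓕(ξ)`,
and the partial products `γγ₁⋯γ_j = (a_j a_{j−1}; q_j q_{j−1})` have `q₁,…,q_ℓ ∈ {1,…,Q}`. -/
theorem eq_mul_FareySet (ω : ℍ) (hu : 0 ≤ (ω : ℂ).re) (hk : ‖(ω : ℂ)‖ ≤ 1)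
    (γ γ' : SL(2,ℤ)) (ξ Q : ℝ) (hξ : 0 < ξ)
    (hc : 0 < γ 1 0) (hd : 0 < γ 1 1) (hc' : 0 < γ' 1 0) (hd' : 0 < γ' 1 1)
    (hle : ent γ 0 0 / ent γ 1 0 ≤ ent γ' 0 1 / ent γ' 1 1)
    (hΦ : Phi ω γ' - Phi ω γ ≤ ξ / Q ^ 2)
    (hQ : ent γ 1 0 ≤ Q ∧ ent γ 1 1 ≤ Q ∧ ent γ' 1 0 ≤ Q ∧ ent γ' 1 1 ≤ Q) :
    ∃ L : List ℤ, L ≠ [] ∧ (∀ K ∈ L, 1 ≤ K) ∧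
      ((L.sum : ℝ) ≤ 4 * ξ / (‖(ω : ℂ)‖) ^ 4) ∧
      (L.map genK).prod ∈ FareySet (‖(ω : ℂ)‖) ξ ∧
      γ' = γ * (L.map genK).prod ∧
      (∀ j : ℕ, 1 ≤ j → j ≤ L.length →
        (1 ≤ (γ * ((L.take j).map genK).prod) 1 0 ∧
          ent (γ * ((L.take j).map genK).prod) 1 0 ≤ Q) ∧
        (γ * ((L.take j).map genK).prod) 1 1 = (γ * ((L.take (j-1)).map genK).prod) 1 0) := by
  obtain ⟨hcQ, hdQ, hc'Q, hd'Q⟩ := hQ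
  have hcQ' : ((γ 1 0 : ℤ):ℝ) ≤ Q := hcQ
  have hdQ' : ((γ 1 1 : ℤ):ℝ) ≤ Q := hdQ
  have hc'Q' : ((γ' 1 0 : ℤ):ℝ) ≤ Q := hc'Q
  have hd'Q' : ((γ' 1 1 : ℤ):ℝ) ≤ Q := hd'Q
  have hc1 : 1 ≤ γ 1 0 := hc
  have hd1 : 1 ≤ γ 1 1 := hd
  have hc'1 : 1 ≤ γ' 1 0 := hc'
  have hd'1 : 1 ≤ γ' 1 1 := hd'
  have hdP := SL_det γ
  have hdG := SL_det γ'
  -- s ≤ 0 from hle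
  have hcR : (0:ℝ) < ent γ 1 0 := by unfold ent; exact_mod_cast hc
  have hd'R : (0:ℝ) < ent γ' 1 1 := by unfold ent; exact_mod_cast hd'
  have hsR : ent γ 0 0 * ent γ' 1 1 ≤ ent γ' 0 1 * ent γ 1 0 := by
    rw [div_le_div_iff₀ hcR hd'R] at hle
    linarith
  have hsZ : γ 0 0 * γ' 1 1 - γ 1 0 * γ' 0 1 ≤ 0 := by
    have h2 : γ 0 0 * γ' 1 1 ≤ γ 1 0 * γ' 0 1 := by
      have : ((γ 0 0 * γ' 1 1 : ℤ):ℝ) ≤ ((γ 1 0 * γ' 0 1 : ℤ):ℝ) := by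
        push_cast
        unfold ent at hsR
        linarith
      exact_mod_cast this
    omega
  -- q ≤ -1
  have hqZ : γ 0 0 * γ' 1 0 - γ 1 0 * γ' 0 0 ≤ -1 := by
    have h1 : γ' 1 1 * (γ 1 0 * γ' 0 0 - γ 0 0 * γ' 1 0)
        = γ 1 0 + γ' 1 0 * (γ 1 0 * γ' 0 1 - γ 0 0 * γ' 1 1) := by
      linear_combination (γ 1 0) * hdG
    rcases le_or_gt 1 (γ 1 0 * γ' 0 0 - γ 0 0 * γ' 1 0) with h | h
    · omega
    · exfalso
      have h3 : γ' 1 1 * (γ 1 0 * γ' 0 0 - γ 0 0 * γ' 1 0) ≤ 0 :=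
        mul_nonpos_of_nonneg_of_nonpos (by omega) (by omega)
      have h4 : 0 ≤ γ' 1 0 * (γ 1 0 * γ' 0 1 - γ 0 0 * γ' 1 1) :=
        mul_nonneg (by omega) (by omega)
      omega
  -- p ≥ 1
  have hpZ : 1 ≤ γ 1 1 * γ' 0 0 - γ 0 1 * γ' 1 0 := by
    have h1 : γ 1 0 * (γ 1 1 * γ' 0 0 - γ 0 1 * γ' 1 0)
        = γ 1 1 * (γ 1 0 * γ' 0 0 - γ 0 0 * γ' 1 0) + γ' 1 0 := by
      linear_combination (γ' 1 0) * hdP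
    rcases le_or_gt 1 (γ 1 1 * γ' 0 0 - γ 0 1 * γ' 1 0) with h | h
    · exact h
    · exfalso
      have h3 : γ 1 0 * (γ 1 1 * γ' 0 0 - γ 0 1 * γ' 1 0) ≤ 0 :=
        mul_nonpos_of_nonneg_of_nonpos (by omega) (by omega)
      have h4 : 1 ≤ γ 1 1 * (γ 1 0 * γ' 0 0 - γ 0 0 * γ' 1 0) :=
        by nlinarith [hd1, hqZ]
      omega
  -- r ≥ 1
  have hrZ : 1 ≤ γ 1 1 * γ' 0 1 - γ 0 1 * γ' 1 1 := by
    have h1 : γ 1 0 * (γ 1 1 * γ' 0 1 - γ 0 1 * γ' 1 1)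
        = γ 1 1 * (γ 1 0 * γ' 0 1 - γ 0 0 * γ' 1 1) + γ' 1 1 := by
      linear_combination (γ' 1 1) * hdP
    rcases le_or_gt 1 (γ 1 1 * γ' 0 1 - γ 0 1 * γ' 1 1) with h | h
    · exact h
    · exfalso
      have h3 : γ 1 0 * (γ 1 1 * γ' 0 1 - γ 0 1 * γ' 1 1) ≤ 0 :=
        mul_nonpos_of_nonneg_of_nonpos (by omega) (by omega)
      have h4 : 0 ≤ γ 1 1 * (γ 1 0 * γ' 0 1 - γ 0 0 * γ' 1 1) :=
        mul_nonneg (by omega) (by omega)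
      omega
  obtain ⟨L, hne, hKmem, hGP, hsum, hpart⟩ :=
    main_ind ω hu hk Q γ' hc'1 hd'1 hc'Q' hd'Q'
      ((γ 1 0 * γ' 0 1 - γ 0 0 * γ' 1 1).toNat) γ hc1 hd1 hcQ' hdQ' hpZ hqZ hrZ hsZ le_rfl
  have habs_pos : 0 < ‖((ω:ℍ):ℂ)‖ := by
    exact norm_pos_iff.mpr (UpperHalfPlane.ne_zero ω)
  have hQpos : (0:ℝ) < Q := by
    have : (1:ℝ) ≤ ((γ 1 0 : ℤ):ℝ) := by exact_mod_cast hc1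
    linarith
  have hsum4 : (‖((ω:ℍ):ℂ)‖)^4 * ((L.sum:ℤ):ℝ) ≤ 4*ξ := by
    have h2 : 4*Q^2*(Phi ω γ' - Phi ω γ) ≤ 4*Q^2*(ξ/Q^2) :=
      mul_le_mul_of_nonneg_left hΦ (by positivity)
    have h3 : 4*Q^2*(ξ/Q^2) = 4*ξ := by field_simp
    linarith [hsum]
  have hsumdiv : ((L.sum:ℤ):ℝ) ≤ 4*ξ/(‖((ω:ℍ):ℂ)‖)^4 := by
    rw [le_div_iff₀ (pow_pos habs_pos 4)]
    linarith [hsum4]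
  refine ⟨L, hne, hKmem, hsumdiv, ⟨L, hne, hKmem, hsumdiv, rfl⟩, hGP, ?_⟩
  intro j hj1 hj2
  exact ⟨⟨(hpart j hj1 hj2).1, (hpart j hj1 hj2).2⟩, partial_11 γ L j hj1 hj2⟩
end
end
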